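/- (Injectivity and Jacobian of the foliation map.) Define Ψ : ℝ³ → ℝ³ by Ψ(t, s, v) = (t + s, t² + 2ts, t³ + 3t²s + v). Then Ψ is injective on ℝ × [0, ∞) × ℝ, and the absolute value of the Jacobian determinant of Ψ at (t,s,v) equals 2s. -/

import Mathlib

noncomputable section

abbrev R3 : Type := ℝ × ℝ × ℝ

/-- The foliation map `Ψ(t,s,v) = (t + s, t² + 2ts, t³ + 3t²s + v)`. -/
def Ψmap (q : R3) : R3 :=
  (q.1 + q.2.1, q.1 ^ 2 + 2 * q.1 * q.2.1, q.1 ^ 3 + 3 * q.1 ^ 2 * q.2.1 + q.2.2)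

/-- The Jacobian matrix of `Ψ` at `q`: its columns are the images of the standard basis
vectors under the total derivative of `Ψ` at `q`. -/
def jacΨ (q : R3) : Matrix (Fin 3) (Fin 3) ℝ :=
  !![(fderiv ℝ Ψmap q ((1:ℝ),(0:ℝ),(0:ℝ))).1, (fderiv ℝ Ψmap q ((0:ℝ),(1:ℝ),(0:ℝ))).1,
       (fderiv ℝ Ψmap q ((0:ℝ),(0:ℝ),(1:ℝ))).1;
     (fderiv ℝ Ψmap q ((1:ℝ),(0:ℝ),(0:ℝ))).2.1, (fderiv ℝ Ψmap q ((0:ℝ),(1:ℝ),(0:ℝ))).2.1,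
       (fderiv ℝ Ψmap q ((0:ℝ),(0:ℝ),(1:ℝ))).2.1;
     (fderiv ℝ Ψmap q ((1:ℝ),(0:ℝ),(0:ℝ))).2.2, (fderiv ℝ Ψmap q ((0:ℝ),(1:ℝ),(0:ℝ))).2.2,
       (fderiv ℝ Ψmap q ((0:ℝ),(0:ℝ),(1:ℝ))).2.2]

/-! If `Ψ(t,s,v) = (x,y,z)` then `x² - y = s²`, so `s ≥ 0` is determined by the image, then
`t = x - s`, and then `v` by `z`. The last column of the Jacobian matrix is `(0,0,1)`, so its
determinant is that of the upper left block, `2t - 2(t + s) = -2s`. -/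

theorem Ψmap_fst_sq_sub_snd_fst (q : R3) : (Ψmap q).1 ^ 2 - (Ψmap q).2.1 = q.2.1 ^ 2 := by
  simp only [Ψmap]
  ring

theorem injOn_Ψmap : Set.InjOn Ψmap {q : R3 | 0 ≤ q.2.1} := by
  rintro ⟨t, s, v⟩ (hs : 0 ≤ s) ⟨t', s', v'⟩ (hs' : 0 ≤ s') h
  have hsq : s ^ 2 = s' ^ 2 := by
    rw [← Ψmap_fst_sq_sub_snd_fst (t, s, v), ← Ψmap_fst_sq_sub_snd_fst (t', s', v'), h]
  obtain rfl : s = s' := (sq_eq_sq₀ hs hs').mp hsq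
  simp only [Ψmap, Prod.mk.injEq] at h
  obtain rfl : t = t' := by linarith [h.1]
  obtain rfl : v = v' := by linarith [h.2.2]
  rfl

def Ψderiv (t s : ℝ) : R3 →L[ℝ] R3 :=
  LinearMap.toContinuousLinearMap
    { toFun := fun u => (u.1 + u.2.1, 2 * (t + s) * u.1 + 2 * t * u.2.1,
        3 * t * (t + 2 * s) * u.1 + 3 * t ^ 2 * u.2.1 + u.2.2)
      map_add' := fun u w => by simp only [Prod.fst_add, Prod.snd_add, Prod.mk_add_mk]; ring_nf
      map_smul' := fun c u => by
        simp only [Prod.smul_fst, Prod.smul_snd, smul_eq_mul, RingHom.id_apply, Prod.smul_mk]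
        ring_nf }

@[simp]
theorem Ψderiv_apply (t s : ℝ) (u : R3) :
    Ψderiv t s u = (u.1 + u.2.1, 2 * (t + s) * u.1 + 2 * t * u.2.1,
      3 * t * (t + 2 * s) * u.1 + 3 * t ^ 2 * u.2.1 + u.2.2) :=
  rfl

theorem hasFDerivAt_Ψmap (t s v : ℝ) : HasFDerivAt Ψmap (Ψderiv t s) (t, s, v) := by
  have ht : HasFDerivAt (fun q : R3 => q.1) (ContinuousLinearMap.fst ℝ ℝ (ℝ × ℝ)) (t, s, v) :=
    hasFDerivAt_fst
  have hs : HasFDerivAt (fun q : R3 => q.2.1)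
      ((ContinuousLinearMap.fst ℝ ℝ ℝ).comp (ContinuousLinearMap.snd ℝ ℝ (ℝ × ℝ))) (t, s, v) :=
    hasFDerivAt_fst.comp _ hasFDerivAt_snd
  have hv : HasFDerivAt (fun q : R3 => q.2.2)
      ((ContinuousLinearMap.snd ℝ ℝ ℝ).comp (ContinuousLinearMap.snd ℝ ℝ (ℝ × ℝ))) (t, s, v) :=
    hasFDerivAt_snd.comp _ hasFDerivAt_snd
  refine ((ht.add hs).prodMk (((ht.pow 2).add ((ht.const_mul 2).mul hs)).prodMk
    (((ht.pow 3).add (((ht.pow 2).const_mul 3).mul hs)).add hv))).congr_fderiv ?_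
  ext <;> simp <;> ring

theorem jacΨ_eq (t s v : ℝ) :
    jacΨ (t, s, v) = !![1, 1, 0; 2 * (t + s), 2 * t, 0; 3 * t * (t + 2 * s), 3 * t ^ 2, 1] := by
  simp only [jacΨ, (hasFDerivAt_Ψmap t s v).fderiv, Ψderiv_apply]
  norm_num

theorem det_jacΨ (t s v : ℝ) : (jacΨ (t, s, v)).det = -(2 * s) := by
  rw [jacΨ_eq, Matrix.det_fin_three]
  simp only [Matrix.of_apply, Matrix.cons_val', Matrix.cons_val_zero, Matrix.cons_val_one,
    Matrix.cons_val_two, Matrix.head_cons, Matrix.tail_cons, Matrix.empty_val',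
    Matrix.cons_val_fin_one, Matrix.head_fin_const]
  ring

/-- **Injectivity and Jacobian of the foliation map**: `Ψ` is injective on
`ℝ × [0,∞) × ℝ`, and the absolute value of its Jacobian determinant at `(t,s,v)`
equals `2s` there. -/
theorem foliation_map_injective_and_jacobian :
    Set.InjOn Ψmap {q : R3 | 0 ≤ q.2.1} ∧
    ∀ t s v : ℝ, 0 ≤ s → |(jacΨ (t, s, v)).det| = 2 * s :=
  ⟨injOn_Ψmap, fun t s v hs => by rw [det_jacΨ, abs_neg, abs_of_nonneg (by positivity)]⟩
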